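/- arXiv:math/9811094 — 3 statements merged into one kernel-verified Lean document; each statement's English description precedes it below -/
import Mathlib

section
/- Let Φ : C(Γ̃_A, ℂ) → ℓ^∞(𝒢) be the isometric unital *-homomorphism Φ(f)(j) = f(j, c_j), whose range is R̃_A. Then Φ maps the ideal {f ∈ C(Γ̃_A, ℂ) : f(p) = 0 for every p ∈ Γ̃_A with p = (⋆, 𝟎)} (where 𝟎 denotes the identically zero element of {0,1}^𝒢; this condition is vacuous if (⋆,𝟎) ∉ Γ̃_A) onto R_A. In particular R_A is isomorphic as a C*-algebra to C₀(Γ_A), where Γ_A := Γ̃_A \ {(⋆, 𝟎)}. -/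
open scoped BoundedContinuousFunction
open OnePoint

noncomputable section

namespace CK

variable {G : Type*}

/-- The `i`-th row of `A` as a complex-valued function on `G`. -/
def rho (A : G → G → Bool) (i : G) : G → ℂ := fun j => if A i j then 1 else 0

/-- The `i`-th row of the identity matrix as a complex-valued function on `G`. -/
def del [DecidableEq G] (i : G) : G → ℂ := fun j => if j = i then 1 else 0

/-- The `j`-th column of `A` as an element of `{0,1}^G`. -/
def col (A : G → G → Bool) (j : G) : G → Bool := fun i => A i j

variable [TopologicalSpace G] [DiscreteTopology G]

/-- `rho A i` as an element of `ℓ^∞(G)`, realized as bounded (continuous) functions on the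
discrete space `G`. -/
def rhoB (A : G → G → Bool) (i : G) : G →ᵇ ℂ :=
  BoundedContinuousFunction.ofNormedAddCommGroupDiscrete (rho A i) 1
    (by intro j; simp only [rho]; split <;> simp)

/-- `del i` as an element of `ℓ^∞(G)`. -/
def delB [DecidableEq G] (i : G) : G →ᵇ ℂ :=
  BoundedContinuousFunction.ofNormedAddCommGroupDiscrete (del i) 1
    (by intro j; simp only [del]; split <;> simp)

/-- The space `Γ̃_A`: the closure of `{(j, c_j) : j ∈ G}` in `G̃ × {0,1}^G`. -/
def GammaT (A : G → G → Bool) : Set (OnePoint G × (G → Bool)) :=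
  closure {p | ∃ j : G, p = ((j : OnePoint G), col A j)}

instance GammaT.compactSpace (A : G → G → Bool) : CompactSpace (GammaT A) :=
  isCompact_iff_compactSpace.mp (isClosed_closure).isCompact

variable [DecidableEq G]

/-- The generators of `R_A`: the rows of `A` and of the identity matrix. -/
def gens (A : G → G → Bool) : Set (G →ᵇ ℂ) :=
  Set.range (rhoB A) ∪ Set.range (delB (G := G))

/-- `R_A`, the smallest closed *-subalgebra of `ℓ^∞(G)` containing the rows of `A` and of the
identity matrix: the closure of the non-unital star subalgebra generated by them. -/
def RA (A : G → G → Bool) : Set (G →ᵇ ℂ) :=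
  closure (NonUnitalStarAlgebra.adjoin ℂ (gens A) : Set (G →ᵇ ℂ))

/-- `R̃_A`, the smallest closed unital *-subalgebra of `ℓ^∞(G)` containing `R_A` and `1`. -/
def RtA (A : G → G → Bool) : StarSubalgebra ℂ (G →ᵇ ℂ) :=
  (StarAlgebra.adjoin ℂ (gens A)).topologicalClosure

/-- The restriction map `Φ : C(Γ̃_A, ℂ) → ℓ^∞(G)`, `Φ(f)(j) = f(j, c_j)`. -/
def Phi (A : G → G → Bool) (f : C(GammaT A, ℂ)) : G →ᵇ ℂ :=
  BoundedContinuousFunction.ofNormedAddCommGroupDiscrete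
    (fun j => f ⟨((j : OnePoint G), col A j), subset_closure ⟨j, rfl⟩⟩) ‖f‖
    (fun j => f.norm_coe_le_norm _)

end CK

/-!
`Φ` is restriction to the dense set of points `(j, c_j)`, hence an isometric *-homomorphism. It
sends the functions `p ↦ [p₂(i) = 1]` and `p ↦ [p₁ = j]` on `Γ̃_A` to the rows `ρ_i` and `δ_i`.
These lifts separate the points of `Γ̃_A`, and their only possible common zero is `(⋆, 𝟎)`. By
non-unital Stone–Weierstrass, the closed non-unital *-subalgebra that they generate is the ideal of
functions vanishing at `(⋆, 𝟎)`. Since `Φ` is isometric, it maps this ideal onto the closure of the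
*-algebra generated by the rows, which is `R_A`.
-/

section NonUnitalStoneWeierstrass

open ContinuousMap

theorem NonUnitalStarAlgebra.mul_mem_adjoin_of_mem_starAlgebraAdjoin {R A : Type*}
    [CommSemiring R] [StarRing R] [Semiring A] [Algebra R A] [StarRing A] [StarModule R A]
    {s : Set A} {b n : A} (hb : b ∈ StarAlgebra.adjoin R s)
    (hn : n ∈ NonUnitalStarAlgebra.adjoin R s) : b * n ∈ NonUnitalStarAlgebra.adjoin R s := by
  rw [← StarAlgebra.adjoin_nonUnitalStarSubalgebra, ← StarSubalgebra.mem_toSubalgebra,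
    ← Subalgebra.mem_toSubmodule, StarAlgebra.adjoin_nonUnitalStarSubalgebra_eq_span] at hb
  obtain ⟨_, hc, m, hm, rfl⟩ := Submodule.mem_sup.1 hb
  obtain ⟨c, rfl⟩ := Submodule.mem_span_singleton.1 hc
  rw [add_mul, smul_mul_assoc, one_mul]
  exact add_mem (SMulMemClass.smul_mem c hn) (mul_mem hm hn)

variable {X 𝕜 : Type*} [TopologicalSpace X] [RCLike 𝕜]

theorem ContinuousMap.apply_eq_zero_of_mem_nonUnitalStarAlgebraAdjoin {S : Set C(X, 𝕜)} {x : X}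
    (hx : ∀ s ∈ S, s x = 0) {f : C(X, 𝕜)} (hf : f ∈ NonUnitalStarAlgebra.adjoin 𝕜 S) :
    f x = 0 := by
  induction hf using NonUnitalStarAlgebra.adjoin_induction with
  | mem s hs => exact hx s hs
  | zero => rfl
  | add f g _ _ hf hg => simp [hf, hg]
  | mul f g _ _ hf _ => simp [hf]
  | smul r f _ hf => simp [hf]
  | star f _ hf => simp [hf]

variable [CompactSpace X] [T2Space X]

theorem ContinuousMap.closure_nonUnitalStarAlgebraAdjoin_eq_idealOfSet (S : Set C(X, 𝕜))
    (hS : (StarAlgebra.adjoin 𝕜 S).SeparatesPoints) :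
    closure (NonUnitalStarAlgebra.adjoin 𝕜 S : Set C(X, 𝕜)) =
      idealOfSet 𝕜 {x | ∃ s ∈ S, s x ≠ 0} := by
  set N := NonUnitalStarAlgebra.adjoin 𝕜 S
  refine subset_antisymm (closure_minimal (fun f hf => mem_idealOfSet.2 fun x hx => ?_)
    (idealOfSet_closed 𝕜 _)) ?_
  · simp only [Set.mem_compl_iff, Set.mem_ofPred_eq, not_exists, not_and, not_not] at hx
    exact apply_eq_zero_of_mem_nonUnitalStarAlgebraAdjoin hx hf
  -- `N` is an ideal of the dense subalgebra `StarAlgebra.adjoin 𝕜 S`, so the ideal it generates in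
  -- `C(X, 𝕜)` stays inside `closure N`; closed ideals of `C(X, 𝕜)` are determined by zero sets.
  · have hdense : closure (StarAlgebra.adjoin 𝕜 S : Set C(X, 𝕜)) = Set.univ := by
      rw [← StarSubalgebra.topologicalClosure_coe,
        starSubalgebra_topologicalClosure_eq_top_of_separatesPoints _ hS, StarSubalgebra.coe_top]
    have hspan : (Ideal.span (N : Set C(X, 𝕜)) : Set C(X, 𝕜)) ⊆ closure N := by
      intro f hf
      induction hf using Submodule.span_induction with
      | mem n hn => exact subset_closure hn
      | zero => exact subset_closure (zero_mem N)
      | add f g _ _ hf hg => exact N.topologicalClosure.add_mem hf hg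
      | smul a f _ hf =>
        refine map_mem_closure₂ continuous_mul (hdense ▸ Set.mem_univ a) hf fun b hb n hn => ?_
        exact NonUnitalStarAlgebra.mul_mem_adjoin_of_mem_starAlgebraAdjoin hb hn
    calc (idealOfSet 𝕜 {x | ∃ s ∈ S, s x ≠ 0} : Set C(X, 𝕜))
        ⊆ idealOfSet 𝕜 (setOfIdeal (Ideal.span (N : Set C(X, 𝕜)))) := by
          refine fun f hf => mem_idealOfSet.2 fun x hx => mem_idealOfSet.1 hf fun ⟨s, hs, hsx⟩ =>
            hx (mem_setOfIdeal.2 ⟨s, Ideal.subset_span (NonUnitalStarAlgebra.subset_adjoin 𝕜 S hs),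
              hsx⟩)
      _ = closure (Ideal.span (N : Set C(X, 𝕜))) := by
          rw [idealOfSet_ofIdeal_eq_closure, Ideal.coe_closure]
      _ ⊆ closure N := closure_minimal hspan isClosed_closure

end NonUnitalStoneWeierstrass

theorem OnePoint.isClopen_singleton_coe {X : Type*} [TopologicalSpace X] [DiscreteTopology X]
    (x : X) : IsClopen {(x : OnePoint X)} := by
  rw [← Set.image_singleton]
  exact ⟨isClosed_image_coe.2 ⟨isClosed_discrete _, isCompact_singleton⟩,
    isOpen_image_coe.2 (isOpen_discrete _)⟩

namespace CK

variable {G : Type*} [TopologicalSpace G] (A : G → G → Bool)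

def colPt (j : G) : GammaT A := ⟨((j : OnePoint G), col A j), subset_closure ⟨j, rfl⟩⟩

theorem denseRange_colPt : DenseRange (colPt A) := by
  let toCols (j : G) : {p | ∃ j : G, p = ((j : OnePoint G), col A j)} := ⟨_, j, rfl⟩
  have hsurj : Function.Surjective toCols := fun ⟨_, j, hj⟩ => ⟨j, Subtype.ext hj.symm⟩
  exact ((denseRange_inclusion_iff subset_closure).2 le_rfl).comp hsurj.denseRange
    (continuous_inclusion _)

def rowLift (i : G) : C(GammaT A, ℂ) :=
  ⟨{p : GammaT A | p.1.2 i}.indicator 1,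
    ((isClopen_discrete {true}).preimage (by fun_prop)).continuous_indicator continuous_const⟩

theorem rowLift_apply (i : G) (p : GammaT A) :
    rowLift A i p = if p.1.2 i then 1 else 0 := by
  show Set.indicator _ 1 p = _
  simp [Set.indicator_apply]

variable [DiscreteTopology G]

theorem Phi_apply (f : C(GammaT A, ℂ)) (j : G) : Phi A f j = f (colPt A j) := rfl

theorem norm_Phi (f : C(GammaT A, ℂ)) : ‖Phi A f‖ = ‖f‖ := by
  refine le_antisymm ((BoundedContinuousFunction.norm_le (norm_nonneg f)).2
    fun j => f.norm_coe_le_norm _) ((ContinuousMap.norm_le f (norm_nonneg _)).2 fun p => ?_)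
  exact (denseRange_colPt A).induction_on p (isClosed_le (by fun_prop) continuous_const)
    fun j => (Phi A f).norm_coe_le_norm j

def phiStarAlgHom : C(GammaT A, ℂ) →⋆ₐ[ℂ] (G →ᵇ ℂ) where
  toFun := Phi A
  map_one' := rfl
  map_mul' _ _ := rfl
  map_zero' := rfl
  map_add' _ _ := rfl
  commutes' _ := rfl
  map_star' _ := rfl

theorem isometry_Phi : Isometry (Phi A) :=
  AddMonoidHomClass.isometry_of_norm (phiStarAlgHom A) (norm_Phi A)

def diagLift (j : G) : C(GammaT A, ℂ) :=
  ⟨{p : GammaT A | p.1.1 = j}.indicator 1,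
    ((OnePoint.isClopen_singleton_coe j).preimage (by fun_prop)).continuous_indicator
      continuous_const⟩

open Classical in
theorem diagLift_apply (j : G) (p : GammaT A) :
    diagLift A j p = if p.1.1 = j then 1 else 0 := by
  show Set.indicator _ 1 p = _
  simp [Set.indicator_apply]

def liftGens : Set C(GammaT A, ℂ) := Set.range (rowLift A) ∪ Set.range (diagLift A)

theorem forall_liftGens_eq_zero_iff (p : GammaT A) :
    (∀ s ∈ liftGens A, s p = 0) ↔ (p : OnePoint G × (G → Bool)) = (∞, fun _ => false) := by
  have hsnd : (∀ i, rowLift A i p = 0) ↔ p.1.2 = fun _ => false := by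
    simp [rowLift_apply, funext_iff]
  have hfst : (∀ j, diagLift A j p = 0) ↔ p.1.1 = ∞ := by
    obtain ⟨⟨x, c⟩, _⟩ := p
    induction x using OnePoint.rec <;> simp [diagLift_apply]
  simp only [liftGens, Set.mem_union, or_imp, forall_and, Set.forall_mem_range, hsnd, hfst,
    Prod.ext_iff, and_comm]

theorem separatesPoints_adjoin_liftGens :
    (StarAlgebra.adjoin ℂ (liftGens A)).SeparatesPoints := by
  intro x y hxy
  suffices ∃ s ∈ liftGens A, s x ≠ s y by
    obtain ⟨s, hs, hne⟩ := this
    exact ⟨s, ⟨s, StarAlgebra.subset_adjoin ℂ _ hs, rfl⟩, hne⟩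
  obtain ⟨⟨a, c⟩, _⟩ := x
  obtain ⟨⟨b, d⟩, _⟩ := y
  by_cases hcd : c = d
  · have hab : a ≠ b := by rintro rfl; subst hcd; exact hxy rfl
    obtain ⟨j, hj⟩ : ∃ j : G, a = j ∨ b = j := by
      induction a using OnePoint.rec with
      | infty => exact (OnePoint.ne_infty_iff_exists.1 hab.symm).imp fun j hj => Or.inr hj.symm
      | coe j => exact ⟨j, Or.inl rfl⟩
    refine ⟨diagLift A j, Or.inr ⟨j, rfl⟩, ?_⟩
    rcases hj with rfl | rfl <;> simp [diagLift_apply, hab, hab.symm]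
  · obtain ⟨i, hi⟩ := Function.ne_iff.1 hcd
    refine ⟨rowLift A i, Or.inl ⟨i, rfl⟩, ?_⟩
    cases hc : c i <;> cases hd : d i <;> simp_all [rowLift_apply]

variable [DecidableEq G]

theorem image_Phi_liftGens : Phi A '' liftGens A = gens A := by
  have hrow : Phi A ∘ rowLift A = rhoB A := by
    ext i j; simp [Phi_apply, rowLift_apply, rhoB, rho, colPt, col]; congr
  have hdiag : Phi A ∘ diagLift A = delB := by
    ext i j; simp [Phi_apply, diagLift_apply, delB, del, colPt]
  rw [liftGens, gens, Set.image_union, ← Set.range_comp, ← Set.range_comp, hrow, hdiag]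

theorem image_Phi_adjoin_liftGens :
    Phi A '' (NonUnitalStarAlgebra.adjoin ℂ (liftGens A) : Set C(GammaT A, ℂ)) =
      NonUnitalStarAlgebra.adjoin ℂ (gens A) := by
  rw [← image_Phi_liftGens]
  exact congrArg SetLike.coe (NonUnitalStarAlgHom.map_adjoin (phiStarAlgHom A) (liftGens A))

end CK

theorem stmt_1_general {G : Type*} [TopologicalSpace G] [DiscreteTopology G]
    [DecidableEq G] (A : G → G → Bool) :
    CK.Phi A '' {f : C(CK.GammaT A, ℂ) |
        ∀ p : CK.GammaT A,
          (p : OnePoint G × (G → Bool)) = (∞, fun _ => false) → f p = 0} =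
      CK.RA A := by
  have hideal : {f : C(CK.GammaT A, ℂ) | ∀ p : CK.GammaT A,
      (p : OnePoint G × (G → Bool)) = (∞, fun _ => false) → f p = 0} =
        ContinuousMap.idealOfSet ℂ {p | ∃ s ∈ CK.liftGens A, s p ≠ 0} := by
    ext f
    simp only [Set.mem_ofPred_eq, SetLike.mem_coe, ContinuousMap.mem_idealOfSet, Set.mem_compl_iff,
      not_exists, not_and, not_not, ← CK.forall_liftGens_eq_zero_iff]
  rw [hideal, ← ContinuousMap.closure_nonUnitalStarAlgebraAdjoin_eq_idealOfSet _
    (CK.separatesPoints_adjoin_liftGens A), ← (CK.isometry_Phi A).isClosedEmbedding.closure_image_eq,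
    CK.image_Phi_adjoin_liftGens, CK.RA]

/-- `Φ` maps the ideal of functions in `C(Γ̃_A, ℂ)` vanishing at the point
`(⋆, 𝟎)` (a vacuous condition if `(⋆,𝟎) ∉ Γ̃_A`) onto `R_A`; in particular
`R_A ≅ C₀(Γ_A)` where `Γ_A = Γ̃_A \ {(⋆,𝟎)}`. -/
theorem stmt_1 {G : Type*} [Nonempty G] [TopologicalSpace G] [DiscreteTopology G]
    [DecidableEq G] (A : G → G → Bool) (hA : ∀ i : G, ∃ j : G, A i j = true) :
    CK.Phi A '' {f : C(CK.GammaT A, ℂ) |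
        ∀ p : CK.GammaT A,
          (p : OnePoint G × (G → Bool)) = (∞, fun _ => false) → f p = 0} =
      CK.RA A :=
  stmt_1_general A
end
end

section
/- Let X be a locally compact Hausdorff space and {E_i}_{i∈Λ} a family of idempotent elements of C₀(X, ℂ) such that the smallest closed subalgebra of C₀(X, ℂ) containing every E_i is all of C₀(X, ℂ), and suppose additionally that the family is closed under multiplication: for all i, j ∈ Λ, either E_i E_j = 0 or E_i E_j = E_k for some k ∈ Λ. Then a function f ∈ C₀(X, ℂ) takes all its values in ℤ if and only if f is a finite ℤ-linear combination of the functions E_i (i.e., f lies in the additive subgroup of C₀(X, ℂ) generated by {E_i : i ∈ Λ}). -/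
open scoped ZeroAtInfty

/-!
Since the family is closed under products, its `ℤ`-span is a ring and its `ℂ`-span contains the
algebra generated by the `E i`, hence is dense. An integer-valued `f` is therefore within `1/2` of
some `g = ∑ i ∈ s, c i • E i` with `s` finite. As the `E i` are `{0, 1}`-valued, `g x`, and hence
`f x = round (g x)`, depends only on the pattern `{i ∈ s | E i x ≠ 0}`, and `f` vanishes where the
pattern is empty. Such a function lies in the ring generated by the `E i`, `i ∈ s`, by induction
on `s`: with `n` the value of `f` on the pattern `{i}`, split
`f = (f - E i * f) + (E i * f - n • E i) + n • E i`; the first two summands are functions of the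
patterns of the idempotents `E j - E j * E i`, resp. `E j * E i` (`j ∈ s`), again vanishing on the
empty pattern.
-/

theorem Subsemigroup.closure_subset_insert_zero {M : Type*} [MulZeroClass M] {s : Set M}
    (hs : ∀ a ∈ s, ∀ b ∈ s, a * b = 0 ∨ a * b ∈ s) :
    (Subsemigroup.closure s : Set M) ⊆ insert 0 s := by
  intro x hx
  induction hx using Subsemigroup.closure_induction with
  | mem x hx => exact Or.inr hx
  | mul x y _ _ hx hy =>
    rcases hx with rfl | hx
    · exact Or.inl (zero_mul y)
    rcases hy with rfl | hy
    · exact Or.inl (mul_zero x)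
    exact hs x hx y hy

theorem NonUnitalAlgebra.adjoin_le_span_of_mul_mem {R A : Type*} [CommSemiring R]
    [NonUnitalNonAssocSemiring A] [Module R A] [IsScalarTower R A A] [SMulCommClass R A A]
    {s : Set A} (hs : ∀ a ∈ s, ∀ b ∈ s, a * b = 0 ∨ a * b ∈ s) :
    (adjoin R s).toSubmodule ≤ Submodule.span R s := by
  rw [adjoin_eq_span, Submodule.span_le]
  exact (Subsemigroup.closure_subset_insert_zero hs).trans
    (Set.insert_subset (zero_mem _) Submodule.subset_span)

theorem NonUnitalSubring.mem_closure_iff_mem_addSubgroupClosure {R : Type*} [NonUnitalRing R]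
    {s : Set R} (hs : ∀ a ∈ s, ∀ b ∈ s, a * b = 0 ∨ a * b ∈ s) {x : R} :
    x ∈ closure s ↔ x ∈ AddSubgroup.closure s := by
  rw [mem_closure_iff]
  refine ⟨fun hx => ?_, fun hx => AddSubgroup.closure_mono Subsemigroup.subset_closure hx⟩
  refine (AddSubgroup.closure_le _).2 ?_ hx
  exact (Subsemigroup.closure_subset_insert_zero hs).trans
    (Set.insert_subset (zero_mem _) AddSubgroup.subset_closure)

theorem round_re_eq_of_norm_sub_lt {n : ℤ} {z : ℂ} (h : ‖(n : ℂ) - z‖ < 1 / 2) :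
    round z.re = n := by
  have hre : |(n : ℝ) - z.re| < 1 / 2 := by
    simpa using (Complex.abs_re_le_norm ((n : ℂ) - z)).trans_lt h
  rw [round_eq_iff, Set.mem_Ico]
  constructor <;> linarith [abs_lt.1 hre]

namespace ZeroAtInftyContinuousMap

theorem sum_apply {X R ι : Type*} [TopologicalSpace X] [TopologicalSpace R] [AddCommMonoid R]
    [ContinuousAdd R] (s : Finset ι) (F : ι → C₀(X, R)) (x : X) :
    (∑ i ∈ s, F i) x = ∑ i ∈ s, F i x :=
  map_sum (⟨⟨fun f => f x, rfl⟩, fun _ _ => rfl⟩ : C₀(X, R) →+ R) F s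

section Pattern

variable {X R ι : Type*} [TopologicalSpace X] [TopologicalSpace R] [Zero R]

open Classical in
noncomputable def pattern (e : ι → C₀(X, R)) (s : Finset ι) (x : X) : Finset ι :=
  {j ∈ s | e j x ≠ 0}

theorem pattern_insert_of_eq_zero [DecidableEq ι] {e : ι → C₀(X, R)} {i : ι} {x : X}
    (h : e i x = 0) (s : Finset ι) : pattern e (insert i s) x = pattern e s x := by
  simp [pattern, Finset.filter_insert, h]

theorem pattern_insert_of_ne_zero [DecidableEq ι] {e : ι → C₀(X, R)} {i : ι} {x : X}
    (h : e i x ≠ 0) (s : Finset ι) : pattern e (insert i s) x = insert i (pattern e s x) := by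
  simp [pattern, Finset.filter_insert, h]

end Pattern

section Ring

variable {X R ι : Type*} [TopologicalSpace X] [Ring R] [TopologicalSpace R] [IsTopologicalRing R]

theorem pattern_mul_of_eq_zero (e : ι → C₀(X, R)) {u : C₀(X, R)} {x : X} (h : u x = 0)
    (s : Finset ι) : pattern (fun j => e j * u) s x = ∅ := by
  simp [pattern, h]

theorem pattern_mul_of_eq_one (e : ι → C₀(X, R)) {u : C₀(X, R)} {x : X} (h : u x = 1)
    (s : Finset ι) : pattern (fun j => e j * u) s x = pattern e s x := by
  ext j
  simp [pattern, coe_mul, h]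

theorem pattern_sub_mul_of_eq_zero (e : ι → C₀(X, R)) {u : C₀(X, R)} {x : X} (h : u x = 0)
    (s : Finset ι) : pattern (fun j => e j - e j * u) s x = pattern e s x := by
  ext j
  simp [pattern, coe_mul, h]

theorem pattern_sub_mul_of_eq_one (e : ι → C₀(X, R)) {u : C₀(X, R)} {x : X} (h : u x = 1)
    (s : Finset ι) : pattern (fun j => e j - e j * u) s x = ∅ := by
  simp [pattern, h]

theorem sum_smul_apply_eq_sum_pattern {e : ι → C₀(X, R)} (he : ∀ j x, e j x = 0 ∨ e j x = 1)
    (c : ι → R) (s : Finset ι) (x : X) :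
    (∑ j ∈ s, c j • e j) x = ∑ j ∈ pattern e s x, c j := by
  classical
  rw [sum_apply, pattern, Finset.sum_filter]
  refine Finset.sum_congr rfl fun j _ => ?_
  rcases he j x with h | h
  · simp [h]
  · simpa [h] using fun h10 => eq_zero_of_zero_eq_one h10.symm (c j)

theorem mem_of_apply_eq_intCast_pattern (Z : NonUnitalSubring C₀(X, R)) {e : ι → C₀(X, R)}
    (heZ : ∀ j, e j ∈ Z) (he : ∀ j x, e j x = 0 ∨ e j x = 1) (s : Finset ι)
    (φ : Finset ι → ℤ) (hφ : φ ∅ = 0) {f : C₀(X, R)} (hf : ∀ x, f x = φ (pattern e s x)) :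
    f ∈ Z := by
  classical
  induction s using Finset.induction_on generalizing e φ f with
  | empty =>
    convert zero_mem Z
    ext x
    simp [hf, pattern, hφ]
  | insert i s _ ih =>
    have hsplit : f = (f - e i * f) + (e i * f - φ {i} • e i) + φ {i} • e i := by abel
    rw [hsplit]
    refine add_mem (add_mem ?_ ?_) (zsmul_mem (heZ i) _)
    · refine ih (e := fun j => e j - e j * e i)
        (fun j => sub_mem (heZ j) (mul_mem (heZ j) (heZ i))) (fun j x => ?_) φ hφ fun x => ?_
      · rcases he j x with h | h <;> rcases he i x with h' | h' <;> simp [coe_mul, h, h']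
      · rcases he i x with h | h
        · simp [coe_mul, h, hf, pattern_insert_of_eq_zero h, pattern_sub_mul_of_eq_zero _ h]
        · simp [coe_mul, h, hφ, pattern_sub_mul_of_eq_one _ h]
    · refine ih (e := fun j => e j * e i) (fun j => mul_mem (heZ j) (heZ i)) (fun j x => ?_)
        (fun T => φ (insert i T) - φ {i}) (by simp) fun x => ?_
      · rcases he j x with h | h <;> rcases he i x with h' | h' <;> simp [coe_mul, h, h']
      · by_cases h : e i x = 0
        · simp [coe_mul, h, pattern_mul_of_eq_zero _ h]
        · have h₁ := (he i x).resolve_left h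
          simp [coe_mul, h₁, hf, pattern_insert_of_ne_zero h, pattern_mul_of_eq_one _ h₁]

theorem exists_intCast_of_mem_addSubgroupClosure {s : Set C₀(X, R)}
    (hs : ∀ e ∈ s, ∀ x, e x = 0 ∨ e x = 1) {f : C₀(X, R)} (hf : f ∈ AddSubgroup.closure s)
    (x : X) : ∃ n : ℤ, f x = n := by
  induction hf using AddSubgroup.closure_induction with
  | mem e he => rcases hs e he x with h | h <;> [exact ⟨0, by simp [h]⟩; exact ⟨1, by simp [h]⟩]
  | zero => exact ⟨0, by simp⟩
  | add a b _ _ ha hb =>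
    obtain ⟨m, hm⟩ := ha
    obtain ⟨n, hn⟩ := hb
    exact ⟨m + n, by simp [hm, hn]⟩
  | neg a _ ha =>
    obtain ⟨n, hn⟩ := ha
    exact ⟨-n, by simp [hn]⟩

end Ring

end ZeroAtInftyContinuousMap

open ZeroAtInftyContinuousMap

theorem stmt_9_general {X : Type*} [TopologicalSpace X]
    {Λ : Type*} (E : Λ → C₀(X, ℂ))
    (hidem : ∀ i : Λ, E i * E i = E i)
    (hgen : closure ((NonUnitalAlgebra.adjoin ℂ (Set.range E) :
        NonUnitalSubalgebra ℂ C₀(X, ℂ)) : Set C₀(X, ℂ)) = Set.univ)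
    (hmul : ∀ i j : Λ, E i * E j = 0 ∨ ∃ k : Λ, E i * E j = E k) :
    ∀ f : C₀(X, ℂ), (∀ x : X, ∃ n : ℤ, f x = (n : ℂ)) ↔
      f ∈ AddSubgroup.closure (Set.range E) := by
  have h01 : ∀ i x, E i x = 0 ∨ E i x = 1 := fun i x =>
    IsIdempotentElem.iff_eq_zero_or_one.1 (show E i x * E i x = E i x by
      simpa only [coe_mul, Pi.mul_apply] using congr($(hidem i) x))
  have hmul' : ∀ a ∈ Set.range E, ∀ b ∈ Set.range E, a * b = 0 ∨ a * b ∈ Set.range E := by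
    rintro _ ⟨i, rfl⟩ _ ⟨j, rfl⟩
    simpa [eq_comm] using hmul i j
  intro f
  refine ⟨fun hf => ?_,
    exists_intCast_of_mem_addSubgroupClosure (by rintro _ ⟨i, rfl⟩; exact h01 i)⟩
  obtain ⟨g, hg, hfg⟩ : ∃ g ∈ Submodule.span ℂ (Set.range E), dist f g < 1 / 2 :=
    Metric.mem_closure_iff.1 (closure_mono (NonUnitalAlgebra.adjoin_le_span_of_mul_mem hmul')
      (hgen ▸ Set.mem_univ f)) _ one_half_pos
  obtain ⟨c, rfl⟩ := Finsupp.mem_span_range_iff_exists_finsupp.1 hg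
  refine (NonUnitalSubring.mem_closure_iff_mem_addSubgroupClosure hmul').1 <|
    mem_of_apply_eq_intCast_pattern _
      (fun i => NonUnitalSubring.subset_closure (Set.mem_range_self i)) h01 c.support (fun T => round (∑ i ∈ T, (c i).re)) (by simp) fun x => ?_
  obtain ⟨n, hn⟩ := hf x
  rw [hn, ← Complex.re_sum, ← sum_smul_apply_eq_sum_pattern h01, round_re_eq_of_norm_sub_lt]
  rw [← hn, dist_eq_norm] at *
  exact (BoundedContinuousFunction.norm_coe_le_norm (f - _).toBCF x).trans_lt hfg

/-- If moreover the family of idempotents is closed under multiplication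
(any product is `0` or again a member of the family), then the integer-valued functions in
`C₀(X, ℂ)` are exactly the finite `ℤ`-linear combinations of the `E_i`. -/
theorem stmt_9 {X : Type*} [TopologicalSpace X] [LocallyCompactSpace X] [T2Space X]
    {Λ : Type*} (E : Λ → C₀(X, ℂ))
    (hidem : ∀ i : Λ, E i * E i = E i)
    (hgen : closure ((NonUnitalAlgebra.adjoin ℂ (Set.range E) :
        NonUnitalSubalgebra ℂ C₀(X, ℂ)) : Set C₀(X, ℂ)) = Set.univ)
    (hmul : ∀ i j : Λ, E i * E j = 0 ∨ ∃ k : Λ, E i * E j = E k) :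
    ∀ f : C₀(X, ℂ), (∀ x : X, ∃ n : ℤ, f x = (n : ℂ)) ↔
      f ∈ AddSubgroup.closure (Set.range E) :=
  stmt_9_general E hidem hgen hmul
end

section
/- Every continuous function f : Ω̃_A → ℤ (where Ω̃_A carries the subspace topology from {0,1}^𝔽 and ℤ is discrete) is a finite ℤ-linear combination of characteristic functions of sets of the form D(μ, X), where μ ranges over admissible words and X over finite subsets of 𝒢 containing the last letter of μ whenever μ ≠ e. -/
open OnePoint

noncomputable section

namespace CKO

variable {G : Type*}

/-- The submonoid `𝔽⁺` of the free group generated by the generators. -/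
def pos (G : Type*) : Submonoid (FreeGroup G) :=
  Submonoid.closure (Set.range (FreeGroup.of : G → FreeGroup G))

/-- The defining relations of `Ω_A^τ` for a subset `ξ ⊆ 𝔽`, identified with a point of
`{0,1}^𝔽`: (a) `e ∈ ξ` and `ξ` contains every initial subword (prefix of the reduced word) of
each of its elements; (b) each `ω ∈ ξ` has at most one `y ∈ G` with `ωy ∈ ξ`; (c) if
`ω, ωy ∈ ξ` then `ωx⁻¹ ∈ ξ ↔ A(x,y) = 1`. -/
def IsCK [DecidableEq G] (A : G → G → Bool) (ξ : FreeGroup G → Bool) : Prop :=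
  ξ 1 = true ∧
  (∀ ω : FreeGroup G, ξ ω = true → ∀ p : List (G × Bool), p <+: ω.toWord →
    ξ (FreeGroup.mk p) = true) ∧
  (∀ ω : FreeGroup G, ξ ω = true → ∀ y z : G,
    ξ (ω * FreeGroup.of y) = true → ξ (ω * FreeGroup.of z) = true → y = z) ∧
  (∀ ω : FreeGroup G, ξ ω = true → ∀ y : G, ξ (ω * FreeGroup.of y) = true →
    ∀ x : G, (ξ (ω * (FreeGroup.of x)⁻¹) = true ↔ A x y = true))

/-- `ξ` is unbounded: it has no upper bound in `𝔽` for the left order `s ≤ t ↔ s⁻¹t ∈ 𝔽⁺`. -/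
def Unbounded (ξ : FreeGroup G → Bool) : Prop :=
  ¬ ∃ t : FreeGroup G, ∀ s : FreeGroup G, ξ s = true → s⁻¹ * t ∈ pos G

/-- `Ω̃_A`: the closure in `{0,1}^𝔽` of the set of unbounded elements of `Ω_A^τ`. -/
def OmegaT [DecidableEq G] (A : G → G → Bool) : Set (FreeGroup G → Bool) :=
  closure {ξ | IsCK A ξ ∧ Unbounded ξ}

end CKO

namespace CKO

variable {G : Type*}

/-- The element of `𝔽⁺` associated to a word in the generators. -/
def wordProd (μ : List G) : FreeGroup G := (μ.map FreeGroup.of).prod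

/-- `μ` is an admissible word: consecutive letters are allowed transitions of `A`. -/
def Admissible (A : G → G → Bool) (μ : List G) : Prop :=
  μ.Chain' fun a b => A a b = true

/-- `X` contains the last letter of `μ` whenever `μ ≠ e`. -/
def LastMem [DecidableEq G] (μ : List G) (X : Finset G) : Prop :=
  ∀ l : G, μ.getLast? = Option.some l → l ∈ X

/-- The set `D(μ, X) = {ξ ∈ Ω̃_A : μ ∈ ξ and μx⁻¹ ∈ ξ for every x ∈ X}`. -/
def D [DecidableEq G] (A : G → G → Bool) (μ : List G) (X : Finset G) :
    Set (FreeGroup G → Bool) :=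
  {ξ | ξ ∈ OmegaT A ∧ ξ (wordProd μ) = true ∧
    ∀ x ∈ X, ξ (wordProd μ * (FreeGroup.of x)⁻¹) = true}

end CKO

/-!
The integer combinations of indicators of the sets `D(μ, X)` form a subring of `Ω̃_A → ℤ`. Indeed,
in `ξ ∈ Ω_A^τ` the positive words form a single admissible path, so `D(μ, X) ∩ D(ν, Y)` is empty
unless `μ` and `ν` are comparable; it is `D(μ, X ∪ Y)` if `μ = ν`, and if `μy` is a prefix of `ν`
it is `∅` or `D(ν, Y)`, by axiom (c) at `μ`.
Every `w ∈ ξ` has reduced form `μν⁻¹` with `μ, ν ∈ 𝔽⁺`, since a letter `x⁻¹` followed by `y`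
would give `x⁻¹` the two successors `x` and `y`. Hence the coordinate set `{ξ | w ∈ ξ}` is empty,
a set `D(μ, X)` when `ν` has length at most one, or, for `w = ρx⁻¹z⁻¹`, the set `{ξ | ρx⁻¹ ∈ ξ}`
or `∅` according to `A(z, x)`.
As `Ω̃_A` is a compact subspace of `{0,1}^𝔽`, a subring containing all coordinate indicators
contains the indicator of every clopen set, hence every continuous `f : Ω̃_A → ℤ`, a finite
combination of the indicators of its fibres.
-/

open Topology

namespace Subalgebra

variable {X : Type*} (S : Subalgebra ℤ (X → ℤ))

theorem indicator_one_inter_mem {s t : Set X} (hs : s.indicator 1 ∈ S) (ht : t.indicator 1 ∈ S) :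
    (s ∩ t).indicator 1 ∈ S := by
  rw [Set.inter_indicator_one]
  exact S.mul_mem hs ht

theorem indicator_one_union_mem {s t : Set X} (hs : s.indicator 1 ∈ S) (ht : t.indicator 1 ∈ S) :
    (s ∪ t).indicator 1 ∈ S := by
  rw [eq_sub_of_add_eq (Set.indicator_union_add_inter (1 : X → ℤ) s t)]
  exact S.sub_mem (S.add_mem hs ht) (S.indicator_one_inter_mem hs ht)

theorem indicator_one_biInter_mem {ι : Type*} (I : Finset ι) {s : ι → Set X}
    (hs : ∀ i ∈ I, (s i).indicator 1 ∈ S) : (⋂ i ∈ I, s i).indicator 1 ∈ S := by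
  classical
  induction I using Finset.induction_on with
  | empty => simp [S.one_mem]
  | insert i I _ ih =>
    rw [Finset.set_biInter_insert]
    exact S.indicator_one_inter_mem (hs i (by simp)) (ih fun j hj => hs j (by simp [hj]))

theorem indicator_one_biUnion_mem {ι : Type*} (I : Finset ι) {s : ι → Set X}
    (hs : ∀ i ∈ I, (s i).indicator 1 ∈ S) : (⋃ i ∈ I, s i).indicator 1 ∈ S := by
  classical
  induction I using Finset.induction_on with
  | empty =>
    rw [show ⋃ i ∈ (∅ : Finset ι), s i = ∅ by simp, Set.indicator_empty]
    exact S.zero_mem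
  | insert i I _ ih =>
    rw [Finset.set_biUnion_insert]
    exact S.indicator_one_union_mem (hs i (by simp)) (ih fun j hj => hs j (by simp [hj]))

variable [TopologicalSpace X] [CompactSpace X]

theorem indicator_one_mem_of_isClopen
    (hbasis : ∀ x, ∀ U ∈ 𝓝 x, ∃ s ∈ 𝓝 x, s ⊆ U ∧ s.indicator 1 ∈ S)
    {U : Set X} (hU : IsClopen U) : U.indicator 1 ∈ S := by
  choose s hs hsU hsS using fun x (hx : x ∈ U) => hbasis x U (hU.isOpen.mem_nhds hx)
  obtain ⟨I, hcover⟩ := hU.isClosed.isCompact.elim_nhds_subcover' s hs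
  have hU_eq : U = ⋃ x ∈ I, s x x.2 :=
    hcover.antisymm (Set.iUnion₂_subset fun x _ => hsU x x.2)
  rw [hU_eq]
  exact S.indicator_one_biUnion_mem I fun x _ => hsS x x.2

theorem continuousMap_mem_of_forall_isClopen (hclopen : ∀ U : Set X, IsClopen U → U.indicator 1 ∈ S)
    (f : C(X, ℤ)) : ⇑f ∈ S := by
  classical
  have hfin : (Set.range f).Finite := (isCompact_range f.continuous).finite_of_discrete
  have hf : ⇑f = ∑ v ∈ hfin.toFinset, v • (f ⁻¹' {v}).indicator 1 := by
    ext x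
    simp only [Finset.sum_apply, Pi.smul_apply, Set.indicator_apply, Set.mem_preimage,
      Set.mem_singleton_iff, Pi.one_apply, smul_eq_mul, mul_ite, mul_one, mul_zero]
    rw [Finset.sum_ite_eq, if_pos (hfin.mem_toFinset.mpr ⟨x, rfl⟩)]
  rw [hf]
  exact S.sum_mem fun v _ =>
    S.smul_mem (hclopen _ ((isClopen_discrete {v}).preimage f.continuous)) v

theorem continuousMap_mem_of_isInducing {ι : Type*} {e : X → ι → Bool} (he : IsInducing e)
    (hS : ∀ i, {x | e x i = true}.indicator 1 ∈ S) (f : C(X, ℤ)) : ⇑f ∈ S := by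
  have hcoord : ∀ i b, {x | e x i = b}.indicator 1 ∈ S := by
    rintro i (_ | _)
    · have : {x | e x i = false} = {x | e x i = true}ᶜ := by ext; simp
      rw [this, Set.indicator_compl]
      exact S.sub_mem S.one_mem (hS i)
    · exact hS i
  refine S.continuousMap_mem_of_forall_isClopen (fun U hU => S.indicator_one_mem_of_isClopen ?_ hU) f
  intro x U hU
  rw [he.nhds_eq_comap, Filter.mem_comap] at hU
  obtain ⟨V, hV, hVU⟩ := hU
  obtain ⟨I, t, ht, hIt⟩ := Filter.mem_pi'.mp (by rwa [nhds_pi] at hV)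
  refine ⟨⋂ i ∈ I, {y | e y i = e x i}, ?_, ?_, S.indicator_one_biInter_mem I fun i _ => hcoord i _⟩
  · refine (Filter.biInter_finset_mem I).mpr fun i _ => ?_
    exact (isOpen_discrete {e x i}).preimage ((continuous_apply i).comp he.continuous)
      |>.mem_nhds rfl
  · intro y hy
    refine hVU (hIt fun i hi => ?_)
    rw [Set.mem_iInter₂.mp hy i hi]
    exact mem_of_mem_nhds (ht i)

end Subalgebra

namespace CKO

open FreeGroup

variable {G : Type*}

theorem wordProd_concat (μ : List G) (a : G) : wordProd (μ ++ [a]) = wordProd μ * of a := by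
  simp [wordProd]

theorem wordProd_eq_mk (μ : List G) : wordProd μ = mk (μ.map fun a => (a, true)) := by
  induction μ with
  | nil => rfl
  | cons a μ ih =>
    rw [wordProd, List.map_cons, List.prod_cons, ← wordProd, ih]
    rfl

theorem mk_append_true (L : List (G × Bool)) (x : G) : mk (L ++ [(x, true)]) = mk L * of x :=
  rfl

theorem mk_append_false (L : List (G × Bool)) (x : G) :
    mk (L ++ [(x, false)]) = mk L * (of x)⁻¹ := by
  rw [of, inv_mk, mul_mk]
  rfl

theorem isReduced_map_true (μ : List G) : FreeGroup.IsReduced (μ.map fun a => (a, true)) := by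
  simp only [FreeGroup.IsReduced, List.isChain_map, implies_true]
  exact List.isChain_iff_forall_rel_of_append_cons_cons.mpr fun _ _ _ _ _ => trivial

theorem exists_eq_map_true_append_map_false {L : List (G × Bool)}
    (hL : L.IsChain fun a b => a.2 = false → b.2 = false) :
    ∃ μ ν : List G, L = μ.map (·, true) ++ ν.map (·, false) := by
  induction L with
  | nil => exact ⟨[], [], rfl⟩
  | cons a L ih =>
    obtain ⟨μ, ν, rfl⟩ := ih hL.tail
    obtain ⟨a, _ | _⟩ := a
    · cases μ with
      | nil => exact ⟨[], a :: ν, rfl⟩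
      | cons c μ => simp at hL
    · exact ⟨a :: μ, ν, rfl⟩

variable [DecidableEq G]

theorem toWord_wordProd (μ : List G) : (wordProd μ).toWord = μ.map fun a => (a, true) := by
  rw [wordProd_eq_mk, toWord_mk, (isReduced_map_true μ).reduce_eq]

theorem toWord_mk_of_prefix {w : FreeGroup G} {p : List (G × Bool)} (hp : p <+: w.toWord) :
    (mk p).toWord = p := by
  rw [toWord_mk, (isReduced_toWord.infix hp.isInfix).reduce_eq]

variable {A : G → G → Bool}

variable (A) in
theorem isClosed_setOf_isCK :
    IsClosed {ξ : FreeGroup G → Bool | IsCK A ξ} := by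
  have hcl : ∀ w b, IsClopen {ξ : FreeGroup G → Bool | ξ w = b} := fun w b =>
    (isClopen_discrete {b}).preimage (continuous_apply w)
  simp only [IsCK, Bool.coe_iff_coe, imp_forall_iff, Set.ofPred_and, Set.ofPred_forall]
  repeat' first
    | intro _
    | exact (hcl _ _).isClosed
    | exact (hcl _ _).isOpen
    | exact isClosed_const
    | exact isOpen_const
    | apply IsClosed.inter
    | apply isClosed_iInter
    | apply isClosed_imp

theorem isCK_of_mem_omegaT {ξ : FreeGroup G → Bool} (hξ : ξ ∈ OmegaT A) : IsCK A ξ :=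
  closure_minimal (fun _ h => h.1) (isClosed_setOf_isCK A) hξ

namespace IsCK

variable {ξ : FreeGroup G → Bool}

theorem mk_of_prefix (h : IsCK A ξ) {w : FreeGroup G} (hw : ξ w = true) {p : List (G × Bool)}
    (hp : p <+: w.toWord) : ξ (mk p) = true :=
  h.2.1 w hw p hp

theorem wordProd_of_prefix (h : IsCK A ξ) {μ ν : List G} (hp : μ <+: ν)
    (hν : ξ (wordProd ν) = true) : ξ (wordProd μ) = true := by
  rw [wordProd_eq_mk]
  exact h.mk_of_prefix hν (by rw [toWord_wordProd]; exact hp.map _)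

theorem mul_inv_of_getLast (h : IsCK A ξ) {μ : List G} (hμ : ξ (wordProd μ) = true) {x : G}
    (hx : x ∈ μ.getLast?) : ξ (wordProd μ * (of x)⁻¹) = true := by
  obtain ⟨μ', rfl⟩ := List.getLast?_eq_some_iff.mp hx
  rw [wordProd_concat, mul_inv_cancel_right]
  exact h.wordProd_of_prefix (List.prefix_append _ _) hμ

theorem admissible (h : IsCK A ξ) {μ : List G} (hμ : ξ (wordProd μ) = true) : Admissible A μ := by
  induction μ using List.reverseRecOn with
  | nil => exact List.isChain_nil
  | append_singleton ρ z ih =>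
    have hρ := h.wordProd_of_prefix (List.prefix_append ρ [z]) hμ
    refine List.isChain_append.mpr ⟨ih hρ, List.isChain_singleton z, fun u hu v hv => ?_⟩
    obtain rfl : v = z := by simpa using hv.symm
    refine (h.2.2.2 _ hρ v ?_ u).mp (h.mul_inv_of_getLast hρ hu)
    rwa [← wordProd_concat]

theorem prefix_or_prefix_of_append (h : IsCK A ξ) (τ : List G) {μ ν : List G}
    (hμ : ξ (wordProd (τ ++ μ)) = true) (hν : ξ (wordProd (τ ++ ν)) = true) :
    μ <+: ν ∨ ν <+: μ := by
  induction μ generalizing τ ν with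
  | nil => exact Or.inl List.nil_prefix
  | cons a μ ih =>
    cases ν with
    | nil => exact Or.inr List.nil_prefix
    | cons b ν =>
      have hτ := h.wordProd_of_prefix (List.prefix_append τ _) hμ
      have ha : ξ (wordProd τ * of a) = true := by
        rw [← wordProd_concat]; exact h.wordProd_of_prefix (by simp) hμ
      have hb : ξ (wordProd τ * of b) = true := by
        rw [← wordProd_concat]; exact h.wordProd_of_prefix (by simp) hν
      obtain rfl := h.2.2.1 _ hτ a b ha hb
      simpa using ih (τ ++ [a]) (by simpa using hμ) (by simpa using hν)

theorem isChain_toWord (h : IsCK A ξ) {w : FreeGroup G} (hw : ξ w = true) :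
    w.toWord.IsChain fun a b => a.2 = false → b.2 = false := by
  refine List.isChain_iff_forall_rel_of_append_cons_cons.mpr ?_
  rintro ⟨x, _ | _⟩ ⟨y, _ | _⟩ p r hwp <;> simp only [imp_self, forall_const, Bool.true_eq_false,
    false_implies]
  have hω := h.mk_of_prefix hw (p := p ++ [(x, false)]) ⟨(y, true) :: r, by simp [hwp]⟩
  have hx : ξ (mk (p ++ [(x, false)]) * of x) = true := by
    rw [mk_append_false, inv_mul_cancel_right]; exact h.mk_of_prefix hw ⟨_, hwp.symm⟩
  have hy : ξ (mk (p ++ [(x, false)]) * of y) = true := by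
    rw [← mk_append_true]; exact h.mk_of_prefix hw ⟨r, by simp [hwp]⟩
  obtain rfl := h.2.2.1 _ hω x y hx hy
  simpa using List.isChain_iff_forall_rel_of_append_cons_cons.mp isReduced_toWord hwp rfl

theorem exists_toWord_eq (h : IsCK A ξ) {w : FreeGroup G} (hw : ξ w = true) :
    ∃ μ ν : List G, w.toWord = μ.map (·, true) ++ ν.map (·, false) :=
  exists_eq_map_true_append_map_false (h.isChain_toWord hw)

end IsCK

theorem D_inter_D_self (μ : List G) (X Y : Finset G) : D A μ X ∩ D A μ Y = D A μ (X ∪ Y) := by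
  ext ξ
  simp only [D, Set.mem_inter_iff, Set.mem_ofPred_eq, Finset.mem_union, or_imp, forall_and]
  tauto

theorem D_inter_D_of_prefix {μ ν : List G} (hp : μ <+: ν) (hne : μ ≠ ν) (X Y : Finset G) :
    D A μ X ∩ D A ν Y = ∅ ∨ D A μ X ∩ D A ν Y = D A ν Y := by
  obtain ⟨_ | ⟨y, t⟩, rfl⟩ := hp
  · simp at hne
  have hsucc : ∀ ξ ∈ D A (μ ++ y :: t) Y,
      IsCK A ξ ∧ ξ (wordProd μ) = true ∧ ξ (wordProd μ * of y) = true := by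
    rintro ξ ⟨hΩ, hν, -⟩
    have hξ := isCK_of_mem_omegaT hΩ
    refine ⟨hξ, hξ.wordProd_of_prefix (List.prefix_append _ _) hν, ?_⟩
    rw [← wordProd_concat]
    exact hξ.wordProd_of_prefix (by simp) hν
  by_cases hAX : ∀ x ∈ X, A x y = true
  · refine Or.inr (Set.inter_eq_right.mpr fun ξ hξν => ?_)
    obtain ⟨hξ, hμ, hμy⟩ := hsucc ξ hξν
    exact ⟨hξν.1, hμ, fun x hx => (hξ.2.2.2 _ hμ y hμy x).mpr (hAX x hx)⟩
  · obtain ⟨x, hx, hAxy⟩ : ∃ x ∈ X, A x y ≠ true := by simpa using hAX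
    refine Or.inl (Set.eq_empty_iff_forall_notMem.mpr fun ξ ⟨hξμ, hξν⟩ => ?_)
    obtain ⟨hξ, hμ, hμy⟩ := hsucc ξ hξν
    exact hAxy ((hξ.2.2.2 _ hμ y hμy x).mp (hξμ.2.2 x hx))

theorem D_inter_D {μ ν : List G} {X Y : Finset G} (hX : LastMem μ X) (hY : LastMem ν Y) :
    D A μ X ∩ D A ν Y = ∅ ∨ ∃ ρ Z, LastMem ρ Z ∧ D A μ X ∩ D A ν Y = D A ρ Z := by
  rcases eq_or_ne μ ν with rfl | hne
  · exact Or.inr ⟨μ, X ∪ Y, fun l hl => Finset.mem_union_left _ (hX l hl), D_inter_D_self μ X Y⟩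
  by_cases hμν : μ <+: ν
  · exact (D_inter_D_of_prefix hμν hne X Y).imp_right fun h => ⟨ν, Y, hY, h⟩
  by_cases hνμ : ν <+: μ
  · rw [Set.inter_comm]
    exact (D_inter_D_of_prefix hνμ hne.symm Y X).imp_right fun h => ⟨μ, X, hX, h⟩
  refine Or.inl (Set.eq_empty_iff_forall_notMem.mpr fun ξ ⟨hξμ, hξν⟩ => ?_)
  exact (isCK_of_mem_omegaT hξμ.1).prefix_or_prefix_of_append [] hξμ.2.1 hξν.2.1 |>.elim hμν hνμ

variable (A) in
def indD (μ : List G) (X : Finset G) : OmegaT A → ℤ :=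
  {ξ : OmegaT A | ξ.1 ∈ D A μ X}.indicator 1

variable (A) in
def dSpan : Submodule ℤ (OmegaT A → ℤ) :=
  Submodule.span ℤ {f | ∃ μ X, Admissible A μ ∧ LastMem μ X ∧ f = indD A μ X}

theorem indD_mem_dSpan {μ : List G} {X : Finset G} (hX : LastMem μ X) : indD A μ X ∈ dSpan A := by
  by_cases hμ : Admissible A μ
  · exact Submodule.subset_span ⟨μ, X, hμ, hX, rfl⟩
  · have : {ξ : OmegaT A | ξ.1 ∈ D A μ X} = ∅ :=
      Set.eq_empty_iff_forall_notMem.mpr fun ξ hξ => hμ ((isCK_of_mem_omegaT ξ.2).admissible hξ.2.1)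
    rw [indD, this, Set.indicator_empty]
    exact Submodule.zero_mem _

theorem one_mem_dSpan : (1 : OmegaT A → ℤ) ∈ dSpan A := by
  have : {ξ : OmegaT A | ξ.1 ∈ D A [] ∅} = Set.univ :=
    Set.eq_univ_of_forall fun ξ => ⟨ξ.2, (isCK_of_mem_omegaT ξ.2).1, by simp⟩
  have hone : (1 : OmegaT A → ℤ) = indD A [] ∅ := by rw [indD, this, Set.indicator_univ]
  rw [hone]
  exact indD_mem_dSpan (by simp [LastMem])

theorem mul_mem_dSpan {f g : OmegaT A → ℤ} (hf : f ∈ dSpan A) (hg : g ∈ dSpan A) :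
    f * g ∈ dSpan A := by
  have hgen : ∀ μ X ν Y, LastMem μ X → LastMem ν Y → indD A μ X * indD A ν Y ∈ dSpan A := by
    intro μ X ν Y hX hY
    rw [indD, indD, ← Set.inter_indicator_one]
    change {ξ : OmegaT A | ξ.1 ∈ D A μ X ∩ D A ν Y}.indicator 1 ∈ dSpan A
    rcases D_inter_D (A := A) hX hY with h | ⟨ρ, Z, hZ, h⟩
    · simp only [h, Set.mem_empty_iff_false, Set.ofPred_false, Set.indicator_empty]
      exact Submodule.zero_mem _
    · rw [h]
      exact indD_mem_dSpan hZ
  have hfg := Submodule.mul_mem_mul hf hg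
  rw [dSpan, Submodule.span_mul_span] at hfg
  refine Submodule.span_le.mpr ?_ hfg
  rintro _ ⟨_, ⟨μ, X, -, hX, rfl⟩, _, ⟨ν, Y, -, hY, rfl⟩, rfl⟩
  exact hgen μ X ν Y hX hY

variable (A) in
def dSubalgebra : Subalgebra ℤ (OmegaT A → ℤ) :=
  (dSpan A).toSubalgebra one_mem_dSpan fun _ _ => mul_mem_dSpan

theorem setOf_apply_eq_D_of_toWord_eq {w : FreeGroup G} {μ : List G}
    (hw : w.toWord = μ.map (·, true)) :
    {ξ : OmegaT A | ξ.1 w = true} = {ξ | ξ.1 ∈ D A μ μ.getLast?.toFinset} := by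
  obtain rfl : w = wordProd μ := by rw [← mk_toWord (x := w), hw, wordProd_eq_mk]
  ext ξ
  refine ⟨fun hξ => ⟨ξ.2, hξ, fun x hx => ?_⟩, fun hξ => hξ.2.1⟩
  exact (isCK_of_mem_omegaT ξ.2).mul_inv_of_getLast hξ (Option.mem_toFinset.mp hx)

theorem setOf_apply_eq_D_of_toWord_eq_concat_inv {w : FreeGroup G} {μ : List G} {z : G}
    (hw : w.toWord = μ.map (·, true) ++ [(z, false)]) :
    {ξ : OmegaT A | ξ.1 w = true} = {ξ | ξ.1 ∈ D A μ (insert z μ.getLast?.toFinset)} := by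
  have hwμ : w = wordProd μ * (of z)⁻¹ := by
    rw [← mk_toWord (x := w), hw, mk_append_false, wordProd_eq_mk]
  ext ξ
  have hξ := isCK_of_mem_omegaT ξ.2
  refine ⟨fun hw' => ?_, fun hD => hwμ ▸ hD.2.2 z (Finset.mem_insert_self _ _)⟩
  have hμ : ξ.1 (wordProd μ) = true := by
    rw [wordProd_eq_mk]
    exact hξ.mk_of_prefix hw' (hw ▸ List.prefix_append _ _)
  refine ⟨ξ.2, hμ, fun x hx => ?_⟩
  rcases Finset.mem_insert.mp hx with rfl | hx
  · exact hwμ ▸ hw'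
  · exact hξ.mul_inv_of_getLast hμ (Option.mem_toFinset.mp hx)

/-- Axiom (c) at `ρ = Px⁻¹`, whose `x`-successor `P` lies in `ξ` whenever `ρ` does. -/
theorem IsCK.apply_iff_of_toWord_eq {ξ : FreeGroup G → Bool} (h : IsCK A ξ) {w : FreeGroup G}
    {P : List (G × Bool)} {x z : G} (hw : w.toWord = P ++ [(x, false), (z, false)]) :
    ξ w = true ↔ ξ (mk (P ++ [(x, false)])) = true ∧ A z x = true := by
  set ρ := mk (P ++ [(x, false)])
  have hρ_prefix : P ++ [(x, false)] <+: w.toWord := ⟨[(z, false)], by simp [hw]⟩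
  have hρ : ρ.toWord = P ++ [(x, false)] := toWord_mk_of_prefix hρ_prefix
  have hwρ : w = ρ * (of z)⁻¹ := by
    rw [← mk_toWord (x := w), hw, ← mk_append_false]
    simp
  have hρx : ρ * of x = mk P := by
    rw [show ρ = mk P * (of x)⁻¹ from mk_append_false P x, inv_mul_cancel_right]
  have hsucc : ξ ρ = true → ξ (ρ * of x) = true := fun hρξ =>
    hρx ▸ h.mk_of_prefix hρξ (hρ ▸ List.prefix_append _ _)
  rw [hwρ]
  refine ⟨fun hw' => ?_, fun ⟨hρξ, hA⟩ => (h.2.2.2 ρ hρξ x (hsucc hρξ) z).mpr hA⟩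
  have hρξ : ξ ρ = true := h.mk_of_prefix (hwρ ▸ hw') hρ_prefix
  exact ⟨hρξ, (h.2.2.2 ρ hρξ x (hsucc hρξ) z).mp hw'⟩

theorem indicator_setOf_apply_mem_dSpan (w : FreeGroup G) :
    {ξ : OmegaT A | ξ.1 w = true}.indicator 1 ∈ dSpan A := by
  by_cases hw : ∃ μ ν : List G, w.toWord = μ.map (·, true) ++ ν.map (·, false)
  swap
  · have : {ξ : OmegaT A | ξ.1 w = true} = ∅ :=
      Set.eq_empty_iff_forall_notMem.mpr fun ξ hξ =>
        hw ((isCK_of_mem_omegaT ξ.2).exists_toWord_eq hξ)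
    rw [this, Set.indicator_empty]
    exact Submodule.zero_mem _
  obtain ⟨μ, ν, hw⟩ := hw
  induction ν using List.reverseRecOn generalizing w with
  | nil =>
    rw [setOf_apply_eq_D_of_toWord_eq (by simpa using hw)]
    exact indD_mem_dSpan fun l hl => by simp [hl]
  | append_singleton ν z ih =>
    rcases ν.eq_nil_or_concat' with rfl | ⟨ν, x, rfl⟩
    · rw [setOf_apply_eq_D_of_toWord_eq_concat_inv (by simpa using hw)]
      exact indD_mem_dSpan fun l hl => Finset.mem_insert_of_mem (by simp [hl])
    set P := μ.map (·, true) ++ ν.map (·, false)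
    have hwP : w.toWord = P ++ [(x, false), (z, false)] := by simp [hw, P]
    have hρ : (mk (P ++ [(x, false)])).toWord = μ.map (·, true) ++ (ν ++ [x]).map (·, false) := by
      rw [toWord_mk_of_prefix (w := w) ⟨[(z, false)], by simp [hwP]⟩]
      simp [P]
    by_cases hA : A z x = true
    · have : {ξ : OmegaT A | ξ.1 w = true} = {ξ | ξ.1 (mk (P ++ [(x, false)])) = true} := by
        ext ξ
        simp [(isCK_of_mem_omegaT ξ.2).apply_iff_of_toWord_eq hwP, hA]
      rw [this]
      exact ih _ hρ
    · have : {ξ : OmegaT A | ξ.1 w = true} = ∅ := by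
        ext ξ
        simp [(isCK_of_mem_omegaT ξ.2).apply_iff_of_toWord_eq hwP, hA]
      rw [this, Set.indicator_empty]
      exact Submodule.zero_mem _

theorem mem_dSpan_of_continuous (f : C(OmegaT A, ℤ)) : ⇑f ∈ dSpan A := by
  have : CompactSpace (OmegaT A) := isCompact_iff_compactSpace.mp isClosed_closure.isCompact
  exact (dSubalgebra A).continuousMap_mem_of_isInducing IsInducing.subtypeVal
    (fun w => indicator_setOf_apply_mem_dSpan w) f

end CKO

open scoped Classical

theorem stmt_12_general {G : Type*} [DecidableEq G]
    (A : G → G → Bool)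
    (f : C(CKO.OmegaT A, ℤ)) :
    ∃ (n : ℕ) (μs : Fin n → List G) (Xs : Fin n → Finset G) (c : Fin n → ℤ),
      (∀ k : Fin n, CKO.Admissible A (μs k) ∧ CKO.LastMem (μs k) (Xs k)) ∧
      ∀ ξ : CKO.OmegaT A,
        f ξ = ∑ k : Fin n,
          c k * (if (ξ : FreeGroup G → Bool) ∈ CKO.D A (μs k) (Xs k) then 1 else 0) := by
  obtain ⟨n, c, g, hfg⟩ := Submodule.mem_span_set'.mp (CKO.mem_dSpan_of_continuous f)
  choose μs Xs hadm hlast hg using fun k => (g k).2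
  refine ⟨n, μs, Xs, c, fun k => ⟨hadm k, hlast k⟩, fun ξ => ?_⟩
  rw [← hfg, Finset.sum_apply]
  simp [hg, CKO.indD, Set.indicator_apply]

/-- Every continuous function `f : Ω̃_A → ℤ` is a finite `ℤ`-linear
combination of characteristic functions of sets `D(μ, X)` with `μ` admissible and `X` a finite
set containing the last letter of `μ` whenever `μ ≠ e`. -/
theorem stmt_12 {G : Type*} [Nonempty G] [DecidableEq G]
    (A : G → G → Bool) (hA : ∀ i : G, ∃ j : G, A i j = true)
    (f : C(CKO.OmegaT A, ℤ)) :
    ∃ (n : ℕ) (μs : Fin n → List G) (Xs : Fin n → Finset G) (c : Fin n → ℤ),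
      (∀ k : Fin n, CKO.Admissible A (μs k) ∧ CKO.LastMem (μs k) (Xs k)) ∧
      ∀ ξ : CKO.OmegaT A,
        f ξ = ∑ k : Fin n,
          c k * (if (ξ : FreeGroup G → Bool) ∈ CKO.D A (μs k) (Xs k) then 1 else 0) :=
  stmt_12_general A f
end
end
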